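/- For k ≥ 1 let B_k = { x ∈ ℝ : |x − 1/k| < 1/(4k²) }, g(ξ, x) = Σ_{k=1}^{∞} 1_{B_k}(x) · bit_k(ξ), and f(ξ, x) = ∫_0^{max{x,0}} g(ξ, t) dt. Then for every integer k ≥ 1, every ξ ∈ [0,1], and every y with |y − 1/k| ≤ 1/(8k²): the function f(ξ, ·) is differentiable at y with derivative f'(ξ, y) = bit_k(ξ); moreover ∫_0^1 f'(ξ, y) dξ = 1/2, where the integral is with respect to Lebesgue measure on [0,1]. -/

import Mathlib

open MeasureTheory

/-- The `k`-th binary digit of `ξ`: `bit_k(ξ) = ⌊2^k ξ⌋ − 2⌊2^{k−1} ξ⌋`. -/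
noncomputable def bitk (k : ℕ) (ξ : ℝ) : ℤ :=
  ⌊(2 : ℝ) ^ k * ξ⌋ - 2 * ⌊(2 : ℝ) ^ (k - 1) * ξ⌋

/-- `B_k = { x ∈ ℝ : |x − 1/k| < 1/(4k²) }`. -/
def Bset (k : ℕ) : Set ℝ := {x | |x - 1 / k| < 1 / (4 * k ^ 2)}

/-- `g(ξ, x) = Σ_{k≥1} 1_{B_k}(x) · bit_k(ξ)`. -/
noncomputable def gLip (ξ x : ℝ) : ℝ :=
  ∑' k : ℕ, (Bset (k + 1)).indicator (fun _ => (1 : ℝ)) x * (bitk (k + 1) ξ : ℝ)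

/-- `f(ξ, x) = ∫_0^{max{x,0}} g(ξ, t) dt`. -/
noncomputable def fLip (ξ x : ℝ) : ℝ := ∫ t in (0 : ℝ)..(max x 0), gLip ξ t

lemma bitk_mem (k : ℕ) (hk : 1 ≤ k) (ξ : ℝ) : bitk k ξ = 0 ∨ bitk k ξ = 1 := by
  unfold bitk
  set x : ℝ := (2:ℝ) ^ (k-1) * ξ with hx
  have h2 : (2:ℝ) ^ k * ξ = 2 * x := by
    rw [hx, ← mul_assoc, ← pow_succ']
    congr 2
    omega
  rw [h2]
  have h1 : 2 * ⌊x⌋ ≤ ⌊2 * x⌋ := by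
    apply Int.le_floor.mpr
    push_cast
    nlinarith [Int.floor_le x]
  have h3 : ⌊2 * x⌋ < 2 * ⌊x⌋ + 2 := by
    apply Int.floor_lt.mpr
    push_cast
    nlinarith [Int.lt_floor_add_one x]
  omega

lemma Bset_disj {i j : ℕ} (hi : 1 ≤ i) (hj : 1 ≤ j) (hne : i ≠ j) {x : ℝ}
    (h1 : x ∈ Bset i) (h2 : x ∈ Bset j) : False := by
  simp only [Bset, Set.mem_setOf_eq] at h1 h2
  set a : ℝ := (i : ℝ) with ha
  set b : ℝ := (j : ℝ) with hb
  have ha1 : (1:ℝ) ≤ a := Nat.one_le_cast.mpr hi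
  have hb1 : (1:ℝ) ≤ b := Nat.one_le_cast.mpr hj
  have hd1 : 1 ≤ |a - b| := by
    rcases Nat.lt_or_ge i j with h | h
    · have h' : (a:ℝ) + 1 ≤ b := by rw [ha, hb]; exact_mod_cast h
      rw [abs_sub_comm, abs_of_pos (by linarith)]
      linarith
    · have hlt : j < i := by omega
      have h' : (b:ℝ) + 1 ≤ a := by rw [ha, hb]; exact_mod_cast hlt
      rw [abs_of_pos (by linarith)]
      linarith
  have hdab : |a - b| < a * b := by
    rcases abs_cases (a - b) with ⟨he, _⟩ | ⟨he, _⟩ <;> rw [he] <;> nlinarith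
  have htri : |1/a - 1/b| ≤ |x - 1/a| + |x - 1/b| := by
    calc |1/a - 1/b| ≤ |1/a - x| + |x - 1/b| := abs_sub_le _ _ _
    _ = |x - 1/a| + |x - 1/b| := by rw [abs_sub_comm (1/a) x]
  have hpa : (0:ℝ) < a := by linarith
  have hpb : (0:ℝ) < b := by linarith
  have hab : (0:ℝ) < a * b := by positivity
  have heq : |1/a - 1/b| = |a - b| / (a * b) := by
    have h' : 1/a - 1/b = (b - a)/(a*b) := by field_simp
    rw [h', abs_div, abs_of_pos hab, abs_sub_comm]
  rw [heq] at htri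
  have hlt : |a - b| / (a * b) < 1 / (4 * a ^ 2) + 1 / (4 * b ^ 2) := by
    calc |a-b|/(a*b) ≤ |x - 1/a| + |x - 1/b| := htri
    _ < 1 / (4 * a ^ 2) + 1 / (4 * b ^ 2) := by
        apply add_lt_add h1 h2
  rw [div_add_div _ _ (by positivity) (by positivity), div_lt_div_iff₀ hab (by positivity)] at hlt
  nlinarith [sq_abs (a - b), abs_nonneg (a - b),
    mul_lt_mul_of_pos_right hdab (lt_of_lt_of_le one_pos hd1),
    mul_le_mul_of_nonneg_left hd1 (le_of_lt (by positivity : (0:ℝ) < 2 * (a*b)))]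

lemma gLip_eq_zero (ξ x : ℝ) (h : ∀ j : ℕ, x ∉ Bset (j+1)) : gLip ξ x = 0 := by
  unfold gLip
  have : ∀ j : ℕ, (Bset (j + 1)).indicator (fun _ => (1 : ℝ)) x * (bitk (j + 1) ξ : ℝ) = 0 := by
    intro j
    rw [Set.indicator_of_notMem (h j), zero_mul]
  rw [tsum_congr this, tsum_zero]

lemma gLip_eq_bit (ξ x : ℝ) (j0 : ℕ) (h : x ∈ Bset (j0+1)) : gLip ξ x = (bitk (j0+1) ξ : ℝ) := by
  unfold gLip
  rw [tsum_eq_single j0]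
  · rw [Set.indicator_of_mem h, one_mul]
  · intro j hj
    rw [Set.indicator_of_notMem, zero_mul]
    intro hx
    exact Bset_disj (Nat.succ_le_succ (Nat.zero_le _)) (Nat.succ_le_succ (Nat.zero_le _))
      (by omega) hx h

lemma gLip_bound (ξ x : ℝ) : ‖gLip ξ x‖ ≤ 1 := by
  by_cases h : ∃ j : ℕ, x ∈ Bset (j+1)
  · obtain ⟨j0, hj0⟩ := h
    rw [gLip_eq_bit ξ x j0 hj0]
    rcases bitk_mem (j0+1) (Nat.succ_le_succ (Nat.zero_le _)) ξ with h' | h' <;>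
      simp [h']
  · push_neg at h
    rw [gLip_eq_zero ξ x h]
    simp

/-- The set where `gLip ξ` equals 1. -/
def Sg (ξ : ℝ) : Set ℝ := ⋃ j : ℕ, if bitk (j+1) ξ = 1 then Bset (j+1) else ∅

lemma Bset_measurable (k : ℕ) : MeasurableSet (Bset k) := by
  have : Bset k = Metric.ball (1 / (k:ℝ)) (1 / (4 * (k:ℝ) ^ 2)) := by
    ext x
    simp [Bset, Metric.mem_ball, Real.dist_eq]
  rw [this]
  exact Metric.isOpen_ball.measurableSet

lemma gLip_eq_indicator (ξ : ℝ) : gLip ξ = (Sg ξ).indicator (fun _ => (1:ℝ)) := by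
  funext x
  by_cases h : ∃ j : ℕ, x ∈ Bset (j+1)
  · obtain ⟨j0, hj0⟩ := h
    rw [gLip_eq_bit ξ x j0 hj0]
    rcases bitk_mem (j0+1) (Nat.succ_le_succ (Nat.zero_le _)) ξ with h' | h'
    · rw [h']
      rw [Set.indicator_of_notMem]
      · simp
      · intro hx
        obtain ⟨s, ⟨j, rfl⟩, hxs⟩ := hx
        simp only at hxs
        split_ifs at hxs with hbit
        · have : j = j0 := by
            by_contra hne
            exact Bset_disj (Nat.succ_le_succ (Nat.zero_le _)) (Nat.succ_le_succ (Nat.zero_le _))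
              (by omega) hxs hj0
          rw [this] at hbit
          rw [hbit] at h'
          exact absurd h' (by norm_num)
        · exact hxs
    · rw [h']
      rw [Set.indicator_of_mem]
      · simp
      · exact Set.mem_iUnion.mpr ⟨j0, by rw [if_pos h']; exact hj0⟩
  · push_neg at h
    rw [gLip_eq_zero ξ x h, Set.indicator_of_notMem]
    intro hx
    obtain ⟨s, ⟨j, rfl⟩, hxs⟩ := hx
    simp only at hxs
    split_ifs at hxs with hbit
    · exact h j hxs
    · exact hxs

lemma gLip_measurable (ξ : ℝ) : Measurable (gLip ξ) := by
  rw [gLip_eq_indicator]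
  apply Measurable.indicator measurable_const
  apply MeasurableSet.iUnion
  intro j
  split_ifs
  · exact Bset_measurable _
  · exact MeasurableSet.empty

lemma gLip_intervalIntegrable (ξ a b : ℝ) : IntervalIntegrable (gLip ξ) volume a b := by
  rw [intervalIntegrable_iff]
  apply Measure.integrableOn_of_bounded (M := 1)
  · exact (measure_Ioc_lt_top).ne
  · exact (gLip_measurable ξ).aestronglyMeasurable
  · exact Filter.Eventually.of_forall fun x => gLip_bound ξ x

lemma sum_range_cast (n : ℕ) : ∑ i ∈ Finset.range n, (i:ℝ) = n*(n-1)/2 := by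
  induction n with
  | zero => simp
  | succ m ih => rw [Finset.sum_range_succ, ih]; push_cast; ring

lemma floor_cast_monotone : Monotone (fun u : ℝ => ((⌊u⌋:ℤ):ℝ)) :=
  fun a b hab => by simpa using (Int.cast_le.mpr (Int.floor_mono hab) : ((⌊a⌋:ℤ):ℝ) ≤ ((⌊b⌋:ℤ):ℝ))

lemma integral_floor_unit (i : ℕ) : ∫ x in (i:ℝ)..((i:ℝ)+1), ((⌊x⌋:ℤ):ℝ) = (i:ℝ) := by
  have hne : ∀ᵐ x : ℝ ∂volume, x ≠ (i:ℝ)+1 := by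
    refine ae_iff.mpr ?_
    simpa using measure_singleton ((i:ℝ)+1)
  have hcong : ∀ᵐ x : ℝ ∂volume, x ∈ Set.uIoc (i:ℝ) ((i:ℝ)+1) → ((⌊x⌋:ℤ):ℝ) = (i:ℝ) := by
    filter_upwards [hne] with x hx hmem
    rw [Set.uIoc_of_le (by linarith)] at hmem
    obtain ⟨h1, h2⟩ := hmem
    have : ⌊x⌋ = (i:ℤ) := by
      rw [Int.floor_eq_iff]
      constructor
      · push_cast; linarith
      · push_cast
        rcases lt_or_eq_of_le h2 with h | h
        · exact h
        · exact absurd h hx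
    rw [this]
    norm_num
  rw [intervalIntegral.integral_congr_ae hcong, intervalIntegral.integral_const]
  simp

lemma integral_floor_mul (n : ℕ) (hn : 1 ≤ n) :
    ∫ x in (0:ℝ)..1, ((⌊(n:ℝ) * x⌋:ℤ):ℝ) = ((n:ℝ) - 1)/2 := by
  have hn0 : ((n:ℝ)) ≠ 0 := by positivity
  rw [intervalIntegral.integral_comp_mul_left (fun u => ((⌊u⌋:ℤ):ℝ)) hn0, mul_zero, mul_one]
  have hadj : ∑ i ∈ Finset.range n, (∫ x in ((i:ℕ):ℝ)..(((i+1:ℕ)):ℝ), ((⌊x⌋:ℤ):ℝ)) =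
      ∫ x in ((0:ℕ):ℝ)..((n:ℕ):ℝ), ((⌊x⌋:ℤ):ℝ) :=
    intervalIntegral.sum_integral_adjacent_intervals
      (fun i _ => floor_cast_monotone.intervalIntegrable)
  have hsum : ∑ i ∈ Finset.range n, (∫ x in ((i:ℕ):ℝ)..(((i+1:ℕ)):ℝ), ((⌊x⌋:ℤ):ℝ)) =
      (n:ℝ)*((n:ℝ)-1)/2 := by
    rw [← sum_range_cast]
    apply Finset.sum_congr rfl
    intro i _
    rw [show (((i+1:ℕ)):ℝ) = ((i:ℕ):ℝ) + 1 by push_cast; ring]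
    exact integral_floor_unit i
  rw [show ((0:ℕ):ℝ) = (0:ℝ) by norm_num] at hadj
  rw [← hadj, hsum, smul_eq_mul]
  field_simp

set_option linter.unnecessarySimpa false in
/-- for every `k ≥ 1`, every `ξ ∈ [0,1]`, and every `y` with
`|y − 1/k| ≤ 1/(8k²)`, the function `f(ξ,·)` is differentiable at `y` with derivative
`bit_k(ξ)`; moreover `∫_0^1 f'(ξ, y) dξ = 1/2`. -/
theorem stmt_11 (k : ℕ) (hk : 1 ≤ k) (y : ℝ) (hy : |y - 1 / k| ≤ 1 / (8 * k ^ 2)) :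
    (∀ ξ ∈ Set.Icc (0 : ℝ) 1, HasDerivAt (fLip ξ) ((bitk k ξ : ℤ) : ℝ) y) ∧
      (∫ ξ in Set.Icc (0 : ℝ) 1, deriv (fLip ξ) y) = 1 / 2 := by
  have hk1 : (1:ℝ) ≤ (k:ℝ) := Nat.one_le_cast.mpr hk
  have hk0 : (0:ℝ) < k := by linarith
  set r : ℝ := 1/(16*(k:ℝ)^2) with hr
  have hrpos : 0 < r := by positivity
  have key : r + 1/(8*(k:ℝ)^2) < 1/(4*(k:ℝ)^2) := by
    rw [hr, div_add_div _ _ (by positivity) (by positivity),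
      div_lt_div_iff₀ (by positivity) (by positivity)]
    nlinarith [mul_pos (pow_pos hk0 2) (pow_pos hk0 2)]
  have hloc : ∀ t : ℝ, |t - y| ≤ r → t ∈ Bset k ∧ 0 < t := by
    intro t ht
    have h1 : |t - 1/(k:ℝ)| < 1/(4*(k:ℝ)^2) :=
      lt_of_le_of_lt (le_trans (abs_sub_le t y _) (add_le_add ht hy)) key
    refine ⟨h1, ?_⟩
    have habs := abs_lt.mp h1
    have hle : 1/(4*(k:ℝ)^2) ≤ 1/(4*(k:ℝ)) := by
      apply one_div_le_one_div_of_le (by linarith)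
      nlinarith
    have e1 : 1/(4*(k:ℝ)) = (1/4)*(1/(k:ℝ)) := by
      rw [div_mul_div_comm]; norm_num
    have hinv : 0 < 1/(k:ℝ) := by positivity
    have h2 := habs.1
    rw [e1] at hle
    linarith
  have hk1' : k - 1 + 1 = k := Nat.succ_pred_eq_of_pos hk
  have main : ∀ ξ : ℝ, HasDerivAt (fLip ξ) ((bitk k ξ : ℤ):ℝ) y := by
    intro ξ
    have hyy : 0 < y := (hloc y (by simpa using hrpos.le)).2
    have haff : HasDerivAt (fun x : ℝ => fLip ξ y + ((bitk k ξ : ℤ):ℝ) * (x - y))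
        ((bitk k ξ : ℤ):ℝ) y := by
      simpa using (((hasDerivAt_id y).sub_const y).const_mul ((bitk k ξ : ℤ):ℝ)).const_add
        (fLip ξ y)
    apply haff.congr_of_eventuallyEq
    filter_upwards [Metric.closedBall_mem_nhds y hrpos] with x hx
    rw [Metric.mem_closedBall, Real.dist_eq] at hx
    have hx0 : 0 < x := (hloc x hx).2
    show fLip ξ x = fLip ξ y + ((bitk k ξ : ℤ):ℝ) * (x - y)
    unfold fLip
    rw [max_eq_left hx0.le, max_eq_left hyy.le]
    have hsub : (∫ t in (0:ℝ)..x, gLip ξ t) - ∫ t in (0:ℝ)..y, gLip ξ t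
        = ∫ t in y..x, gLip ξ t :=
      intervalIntegral.integral_interval_sub_left (gLip_intervalIntegrable ξ 0 x)
        (gLip_intervalIntegrable ξ 0 y)
    have hcst : ∫ t in y..x, gLip ξ t = (x - y) • ((bitk k ξ : ℤ):ℝ) := by
      rw [intervalIntegral.integral_congr (g := fun _ => ((bitk k ξ : ℤ):ℝ)),
        intervalIntegral.integral_const]
      intro t ht
      have htr : |t - y| ≤ r := by
        rcases le_total y x with h | h
        · rw [Set.uIcc_of_le h] at ht
          obtain ⟨h1t, h2t⟩ := ht
          rw [abs_of_nonneg (by linarith)]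
          have := le_abs_self (x - y)
          linarith
        · rw [Set.uIcc_of_ge h] at ht
          obtain ⟨h1t, h2t⟩ := ht
          rw [abs_of_nonpos (by linarith)]
          have := neg_abs_le (x - y)
          rw [abs_sub_comm] at hx
          linarith [le_abs_self (y - x)]
      have htB := (hloc t htr).1
      have := gLip_eq_bit ξ t (k-1) (by rw [hk1']; exact htB)
      rw [hk1'] at this
      exact this
    rw [smul_eq_mul] at hcst
    linarith
  refine ⟨fun ξ _ => main ξ, ?_⟩
  have hfun : (fun ξ => deriv (fLip ξ) y) = fun ξ : ℝ => ((bitk k ξ : ℤ):ℝ) :=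
    funext fun ξ => (main ξ).deriv
  rw [hfun, MeasureTheory.integral_Icc_eq_integral_Ioc,
    ← intervalIntegral.integral_of_le zero_le_one]
  have hbit : ∀ ξ : ℝ, ((bitk k ξ : ℤ):ℝ)
      = ((⌊(2:ℝ)^k * ξ⌋:ℤ):ℝ) - 2 * ((⌊(2:ℝ)^(k-1) * ξ⌋:ℤ):ℝ) := by
    intro ξ; unfold bitk; push_cast; ring
  rw [intervalIntegral.integral_congr (g := fun ξ =>
    ((⌊(2:ℝ)^k * ξ⌋:ℤ):ℝ) - 2 * ((⌊(2:ℝ)^(k-1) * ξ⌋:ℤ):ℝ)) (fun ξ _ => hbit ξ)]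
  have hmono1 : Monotone (fun x : ℝ => ((⌊(2:ℝ)^k * x⌋:ℤ):ℝ)) := fun a b hab => by
    have : (2:ℝ)^k * a ≤ (2:ℝ)^k * b := by nlinarith [pow_pos (by norm_num : (0:ℝ) < 2) k]
    exact floor_cast_monotone this
  have hmono2 : Monotone (fun x : ℝ => ((⌊(2:ℝ)^(k-1) * x⌋:ℤ):ℝ)) := fun a b hab => by
    have : (2:ℝ)^(k-1) * a ≤ (2:ℝ)^(k-1) * b := by
      nlinarith [pow_pos (by norm_num : (0:ℝ) < 2) (k-1)]
    exact floor_cast_monotone this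
  rw [intervalIntegral.integral_sub hmono1.intervalIntegrable
    (hmono2.intervalIntegrable.const_mul 2), intervalIntegral.integral_const_mul]
  have hc1 : ((2^k : ℕ):ℝ) = (2:ℝ)^k := by push_cast; ring
  have hc2 : ((2^(k-1) : ℕ):ℝ) = (2:ℝ)^(k-1) := by push_cast; ring
  have e1 : ∫ x in (0:ℝ)..1, ((⌊(2:ℝ)^k * x⌋:ℤ):ℝ) = ((2:ℝ)^k - 1)/2 := by
    rw [← hc1]
    exact integral_floor_mul (2^k) Nat.one_le_two_pow
  have e2 : ∫ x in (0:ℝ)..1, ((⌊(2:ℝ)^(k-1) * x⌋:ℤ):ℝ) = ((2:ℝ)^(k-1) - 1)/2 := by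
    rw [← hc2]
    exact integral_floor_mul (2^(k-1)) Nat.one_le_two_pow
  rw [e1, e2]
  have hp : (2:ℝ)^k = 2*2^(k-1) := by
    rw [← pow_succ']
    congr 1
    omega
  rw [hp]
  ring
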